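/- Let p be a prime with p ≡ 1 (mod 8). Write p = (a_p + b_p√2)(a_p - b_p√2) with (a_p, b_p) the minimal positive solution of a² - 2b² = p. Then there exists α ∈ ℤ[ζ₈] such that σ₁(α)σ₇(α) = a_p + b_p√2 and σ₃(α)σ₅(α) = a_p - b_p√2, where σ_j(ζ₈) = ζ₈^j. Consequently the squared canonical length of α is 2(a_p+b_p√2) + 2(a_p-b_p√2) = 4a_p. -/

import Mathlib

open Complex

/-- A primitive 8th root of unity in `ℂ`. -/
noncomputable def ζ₈ : ℂ := Complex.exp (2 * Real.pi * Complex.I / 8)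

/-- The image under `σⱼ : ζ₈ ↦ ζ₈ʲ` of the element `a + b ζ₈ + c ζ₈² + d ζ₈³` of `ℤ[ζ₈]`. -/
noncomputable def conj8 (a b c d : ℤ) (j : ℕ) : ℂ :=
  a + b * ζ₈ ^ j + c * ζ₈ ^ (2 * j) + d * ζ₈ ^ (3 * j)

/-! ### A concrete model of `ℤ[ζ₈]` -/

@[ext] structure Z8 where
  x0 : ℤ
  x1 : ℤ
  x2 : ℤ
  x3 : ℤ

namespace Z8

instance : Zero Z8 := ⟨⟨0, 0, 0, 0⟩⟩
instance : One Z8 := ⟨⟨1, 0, 0, 0⟩⟩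
instance : Add Z8 := ⟨fun a b => ⟨a.x0 + b.x0, a.x1 + b.x1, a.x2 + b.x2, a.x3 + b.x3⟩⟩
instance : Neg Z8 := ⟨fun a => ⟨-a.x0, -a.x1, -a.x2, -a.x3⟩⟩
instance : Mul Z8 :=
  ⟨fun a b =>
    ⟨a.x0 * b.x0 - a.x1 * b.x3 - a.x2 * b.x2 - a.x3 * b.x1,
     a.x0 * b.x1 + a.x1 * b.x0 - a.x2 * b.x3 - a.x3 * b.x2,
     a.x0 * b.x2 + a.x1 * b.x1 + a.x2 * b.x0 - a.x3 * b.x3,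
     a.x0 * b.x3 + a.x1 * b.x2 + a.x2 * b.x1 + a.x3 * b.x0⟩⟩

@[simp] lemma zero_x0 : (0 : Z8).x0 = 0 := rfl
@[simp] lemma zero_x1 : (0 : Z8).x1 = 0 := rfl
@[simp] lemma zero_x2 : (0 : Z8).x2 = 0 := rfl
@[simp] lemma zero_x3 : (0 : Z8).x3 = 0 := rfl
@[simp] lemma one_x0 : (1 : Z8).x0 = 1 := rfl
@[simp] lemma one_x1 : (1 : Z8).x1 = 0 := rfl
@[simp] lemma one_x2 : (1 : Z8).x2 = 0 := rfl
@[simp] lemma one_x3 : (1 : Z8).x3 = 0 := rfl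
@[simp] lemma add_x0 (a b : Z8) : (a + b).x0 = a.x0 + b.x0 := rfl
@[simp] lemma add_x1 (a b : Z8) : (a + b).x1 = a.x1 + b.x1 := rfl
@[simp] lemma add_x2 (a b : Z8) : (a + b).x2 = a.x2 + b.x2 := rfl
@[simp] lemma add_x3 (a b : Z8) : (a + b).x3 = a.x3 + b.x3 := rfl
@[simp] lemma neg_x0 (a : Z8) : (-a).x0 = -a.x0 := rfl
@[simp] lemma neg_x1 (a : Z8) : (-a).x1 = -a.x1 := rfl
@[simp] lemma neg_x2 (a : Z8) : (-a).x2 = -a.x2 := rfl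
@[simp] lemma neg_x3 (a : Z8) : (-a).x3 = -a.x3 := rfl
@[simp] lemma mul_x0 (a b : Z8) :
    (a * b).x0 = a.x0 * b.x0 - a.x1 * b.x3 - a.x2 * b.x2 - a.x3 * b.x1 := rfl
@[simp] lemma mul_x1 (a b : Z8) :
    (a * b).x1 = a.x0 * b.x1 + a.x1 * b.x0 - a.x2 * b.x3 - a.x3 * b.x2 := rfl
@[simp] lemma mul_x2 (a b : Z8) :
    (a * b).x2 = a.x0 * b.x2 + a.x1 * b.x1 + a.x2 * b.x0 - a.x3 * b.x3 := rfl
@[simp] lemma mul_x3 (a b : Z8) :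
    (a * b).x3 = a.x0 * b.x3 + a.x1 * b.x2 + a.x2 * b.x1 + a.x3 * b.x0 := rfl
@[simp] lemma mk_x0 (a b c d : ℤ) : (Z8.mk a b c d).x0 = a := rfl
@[simp] lemma mk_x1 (a b c d : ℤ) : (Z8.mk a b c d).x1 = b := rfl
@[simp] lemma mk_x2 (a b c d : ℤ) : (Z8.mk a b c d).x2 = c := rfl
@[simp] lemma mk_x3 (a b c d : ℤ) : (Z8.mk a b c d).x3 = d := rfl

instance : CommRing Z8 where
  add := (· + ·)
  zero := 0
  neg := Neg.neg
  mul := (· * ·)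
  one := 1
  add_assoc a b c := by ext <;> simp <;> ring
  zero_add a := by ext <;> simp
  add_zero a := by ext <;> simp
  add_comm a b := by ext <;> simp <;> ring
  neg_add_cancel a := by ext <;> simp
  mul_assoc a b c := by ext <;> simp <;> ring
  one_mul a := by ext <;> simp
  mul_one a := by ext <;> simp
  left_distrib a b c := by ext <;> simp <;> ring
  right_distrib a b c := by ext <;> simp <;> ring
  zero_mul a := by ext <;> simp
  mul_zero a := by ext <;> simp
  mul_comm a b := by ext <;> simp <;> ring
  nsmul := nsmulRec
  zsmul := zsmulRec

@[simp] lemma sub_x0 (a b : Z8) : (a - b).x0 = a.x0 - b.x0 := by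
  rw [sub_eq_add_neg, sub_eq_add_neg]; rfl
@[simp] lemma sub_x1 (a b : Z8) : (a - b).x1 = a.x1 - b.x1 := by
  rw [sub_eq_add_neg, sub_eq_add_neg]; rfl
@[simp] lemma sub_x2 (a b : Z8) : (a - b).x2 = a.x2 - b.x2 := by
  rw [sub_eq_add_neg, sub_eq_add_neg]; rfl
@[simp] lemma sub_x3 (a b : Z8) : (a - b).x3 = a.x3 - b.x3 := by
  rw [sub_eq_add_neg, sub_eq_add_neg]; rfl

/-- scalar embedding -/
def scal (n : ℤ) : Z8 := ⟨n, 0, 0, 0⟩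

lemma scal_mul (m n : ℤ) : scal (m * n) = scal m * scal n := by
  ext <;> simp [scal]

lemma scal_one : scal 1 = 1 := rfl

/-- the Galois maps -/
def σ3 (a : Z8) : Z8 := ⟨a.x0, a.x3, -a.x2, a.x1⟩
def σ5 (a : Z8) : Z8 := ⟨a.x0, -a.x1, a.x2, -a.x3⟩
def σ7 (a : Z8) : Z8 := ⟨a.x0, -a.x3, -a.x2, -a.x1⟩

lemma σ7_mul (a b : Z8) : σ7 (a * b) = σ7 a * σ7 b := by
  ext <;> simp [σ7] <;> ring

lemma σ7_dvd {a b : Z8} (h : a ∣ b) : σ7 a ∣ σ7 b := by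
  obtain ⟨c, rfl⟩ := h
  exact ⟨σ7 c, σ7_mul a c⟩

/-- the coefficients of the relative norm to `ℤ[√2]`, and the absolute norm -/
def S (a : Z8) : ℤ := a.x0 ^ 2 + a.x1 ^ 2 + a.x2 ^ 2 + a.x3 ^ 2
def T (a : Z8) : ℤ := a.x0 * a.x1 + a.x1 * a.x2 + a.x2 * a.x3 - a.x3 * a.x0
def A (a : Z8) : ℤ := a.x0 ^ 2 - a.x1 ^ 2 + a.x2 ^ 2 - a.x3 ^ 2
def B (a : Z8) : ℤ := a.x0 * a.x1 - a.x1 * a.x2 + a.x2 * a.x3 + a.x0 * a.x3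
def Nm (a : Z8) : ℤ := A a ^ 2 + 2 * B a ^ 2

lemma Nm_eq (a : Z8) : Nm a = S a ^ 2 - 2 * T a ^ 2 := by
  simp only [Nm, A, B, S, T]; ring

lemma Nm_mul (a b : Z8) : Nm (a * b) = Nm a * Nm b := by
  simp only [Nm, A, B, mul_x0, mul_x1, mul_x2, mul_x3]; ring

lemma Nm_nonneg (a : Z8) : 0 ≤ Nm a := by
  simp only [Nm]; positivity

lemma S_nonneg (a : Z8) : 0 ≤ S a := by
  simp only [S]; positivity

lemma Nm_dvd {a b : Z8} (h : a ∣ b) : Nm a ∣ Nm b := by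
  obtain ⟨c, rfl⟩ := h
  exact ⟨Nm c, Nm_mul a c⟩

lemma Nm_σ3 (a : Z8) : Nm (σ3 a) = Nm a := by
  simp only [Nm, A, B, σ3, mk_x0, mk_x1, mk_x2, mk_x3]; ring

lemma Nm_σ5 (a : Z8) : Nm (σ5 a) = Nm a := by
  simp only [Nm, A, B, σ5, mk_x0, mk_x1, mk_x2, mk_x3]; ring

lemma Nm_σ7 (a : Z8) : Nm (σ7 a) = Nm a := by
  simp only [Nm, A, B, σ7, mk_x0, mk_x1, mk_x2, mk_x3]; ring

lemma S_σ3 (a : Z8) : S (σ3 a) = S a := by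
  simp only [S, σ3, mk_x0, mk_x1, mk_x2, mk_x3]; ring

lemma T_σ3 (a : Z8) : T (σ3 a) = -T a := by
  simp only [T, σ3, mk_x0, mk_x1, mk_x2, mk_x3]; ring

/-- the key identity `x ⬝ σ3 x ⬝ σ5 x ⬝ σ7 x = Nm x`. -/
lemma mul_conjs (a : Z8) : a * (σ3 a * (σ5 a * σ7 a)) = scal (Nm a) := by
  ext <;> simp [σ3, σ5, σ7, scal, Nm, A, B] <;> ring

lemma mul_σ7 (a : Z8) : a * σ7 a = ⟨S a, T a, 0, -T a⟩ := by
  ext <;> simp [σ7, S, T] <;> ring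

/-- a unit: `ε⁻¹ = -1 + √2`.  Multiplication by it changes the relative norm by `ε⁻² = 3 - 2√2`. -/
def u : Z8 := ⟨-1, 1, 0, -1⟩

lemma S_mul_u (a : Z8) : S (a * u) = 3 * S a - 4 * T a := by
  simp only [S, T, u, mul_x0, mul_x1, mul_x2, mul_x3, mk_x0, mk_x1, mk_x2, mk_x3]; ring

lemma T_mul_u (a : Z8) : T (a * u) = 3 * T a - 2 * S a := by
  simp only [S, T, u, mul_x0, mul_x1, mul_x2, mul_x3, mk_x0, mk_x1, mk_x2, mk_x3]; ring

end Z8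

/-! ### Integer lemmas -/

lemma sq_eq_two_sq_aux : ∀ n : ℕ, ∀ x y : ℤ, x.natAbs = n → x ^ 2 = 2 * y ^ 2 →
    x = 0 ∧ y = 0 := by
  intro n
  induction n using Nat.strong_induction_on with
  | _ n ih =>
    intro x y hn h
    rcases eq_or_ne x 0 with hx | hx
    · subst hx
      refine ⟨rfl, ?_⟩
      nlinarith [sq_nonneg y]
    · exfalso
      have h2 : (2 : ℤ) ∣ x := by
        refine Prime.dvd_of_dvd_pow Int.prime_two (n := 2) ⟨y ^ 2, h⟩
      obtain ⟨z, rfl⟩ := h2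
      have hy2 : y ^ 2 = 2 * z ^ 2 := by nlinarith
      have hy0 : y ≠ 0 := by
        intro h0
        subst h0
        have h1 : z ^ 2 = 0 := by nlinarith [sq_nonneg z]
        have hz0 : z = 0 := sq_eq_zero_iff.mp h1
        exact hx (by rw [hz0]; ring)
      have hy2pos : 0 < y ^ 2 := by positivity
      have h1 : y ^ 2 < (2 * z) ^ 2 := by linarith
      have hlt : y.natAbs < (2 * z).natAbs := by
        zify
        nlinarith [abs_nonneg y, abs_nonneg (2 * z), _root_.sq_abs y, _root_.sq_abs (2 * z), h1]
      have := ih y.natAbs (hn ▸ hlt) y z rfl hy2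
      exact hy0 this.1

lemma sq_eq_two_sq (x y : ℤ) (h : x ^ 2 = 2 * y ^ 2) : x = 0 ∧ y = 0 :=
  sq_eq_two_sq_aux x.natAbs x y rfl h

lemma Z8.S_eq_zero {a : Z8} (h : Z8.S a = 0) : a = 0 := by
  simp only [Z8.S] at h
  ext <;> simp <;> nlinarith [sq_nonneg a.x0, sq_nonneg a.x1, sq_nonneg a.x2, sq_nonneg a.x3]

lemma Z8.Nm_eq_zero {a : Z8} (h : Z8.Nm a = 0) : a = 0 := by
  rw [Z8.Nm_eq] at h
  have h2 : Z8.S a ^ 2 = 2 * Z8.T a ^ 2 := by linarith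
  exact Z8.S_eq_zero (sq_eq_two_sq _ _ h2).1

/-- rounding division in ℤ -/
lemma round_div (m n : ℤ) (hn : 0 < n) : ∃ k r : ℤ, m = n * k + r ∧ (2 * r) ^ 2 ≤ n ^ 2 := by
  have h1 : 0 ≤ m % n := Int.emod_nonneg m hn.ne'
  have h2 : m % n < n := Int.emod_lt_of_pos m hn
  have h3 : n * (m / n) + m % n = m := Int.mul_ediv_add_emod m n
  rcases le_or_gt (2 * (m % n)) n with h | h
  · exact ⟨m / n, m % n, by linarith, by nlinarith⟩
  · refine ⟨m / n + 1, m % n - n, by linarith [h3], by nlinarith⟩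

/-- the Euclidean bound -/
lemma Z8.nm_bound (n r0 r1 r2 r3 : ℤ) (h0 : (2 * r0) ^ 2 ≤ n ^ 2) (h1 : (2 * r1) ^ 2 ≤ n ^ 2)
    (h2 : (2 * r2) ^ 2 ≤ n ^ 2) (h3 : (2 * r3) ^ 2 ≤ n ^ 2) :
    4 * Z8.Nm ⟨r0, r1, r2, r3⟩ ≤ 3 * n ^ 4 := by
  simp only [Z8.Nm, Z8.A, Z8.B, Z8.mk_x0, Z8.mk_x1, Z8.mk_x2, Z8.mk_x3]
  have hA : (4 * (r0 ^ 2 - r1 ^ 2 + r2 ^ 2 - r3 ^ 2)) ^ 2 ≤ 4 * n ^ 4 := by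
    have lup : 4 * (r0 ^ 2 - r1 ^ 2 + r2 ^ 2 - r3 ^ 2) ≤ 2 * n ^ 2 := by nlinarith
    have llow : -(2 * n ^ 2) ≤ 4 * (r0 ^ 2 - r1 ^ 2 + r2 ^ 2 - r3 ^ 2) := by nlinarith
    nlinarith [sq_le_sq' llow lup]
  have hB : (4 * (r0 * r1 - r1 * r2 + r2 * r3 + r0 * r3)) ^ 2 ≤ 4 * n ^ 4 := by
    rcases le_total ((2 * r2) ^ 2) ((2 * r0) ^ 2) with hc | hc
    · have k1 : 0 ≤ (2 * r0 - 2 * r2) ^ 2 + ((2 * r0) ^ 2 - (2 * r2) ^ 2) := by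
        nlinarith [sq_nonneg (2 * r0 - 2 * r2)]
      have k2 : 0 ≤ (2 * r0 + 2 * r2) ^ 2 + ((2 * r0) ^ 2 - (2 * r2) ^ 2) := by
        nlinarith [sq_nonneg (2 * r0 + 2 * r2)]
      nlinarith [mul_nonneg (sub_nonneg.2 h1) k1, mul_nonneg (sub_nonneg.2 h3) k2,
        mul_nonneg (sq_nonneg (2 * r1 - 2 * r3)) (sub_nonneg.2 hc),
        mul_le_mul_of_nonneg_left h0 (show (0:ℤ) ≤ 4 * n ^ 2 by positivity)]
    · have k1 : 0 ≤ (2 * r0 - 2 * r2) ^ 2 + ((2 * r2) ^ 2 - (2 * r0) ^ 2) := by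
        nlinarith [sq_nonneg (2 * r0 - 2 * r2)]
      have k2 : 0 ≤ (2 * r0 + 2 * r2) ^ 2 + ((2 * r2) ^ 2 - (2 * r0) ^ 2) := by
        nlinarith [sq_nonneg (2 * r0 + 2 * r2)]
      nlinarith [mul_nonneg (sub_nonneg.2 h1) k1, mul_nonneg (sub_nonneg.2 h3) k2,
        mul_nonneg (sq_nonneg (2 * r1 + 2 * r3)) (sub_nonneg.2 hc),
        mul_le_mul_of_nonneg_left h2 (show (0:ℤ) ≤ 4 * n ^ 2 by positivity)]
  nlinarith [hA, hB]

/-- Euclidean division in `Z8`. -/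
lemma Z8.exists_div (x y : Z8) (hy : 0 < Z8.Nm y) : ∃ q : Z8, Z8.Nm (x - q * y) < Z8.Nm y := by
  set n := Z8.Nm y with hn
  set M := Z8.σ3 y * (Z8.σ5 y * Z8.σ7 y) with hM
  have hyM : y * M = Z8.scal n := Z8.mul_conjs y
  obtain ⟨k0, r0, e0, b0⟩ := round_div (x * M).x0 n hy
  obtain ⟨k1, r1, e1, b1⟩ := round_div (x * M).x1 n hy
  obtain ⟨k2, r2, e2, b2⟩ := round_div (x * M).x2 n hy
  obtain ⟨k3, r3, e3, b3⟩ := round_div (x * M).x3 n hy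
  refine ⟨⟨k0, k1, k2, k3⟩, ?_⟩
  set q : Z8 := ⟨k0, k1, k2, k3⟩ with hq
  have key : (x - q * y) * M = ⟨r0, r1, r2, r3⟩ := by
    have hstep : (x - q * y) * M = x * M - q * (y * M) := by ring
    rw [hstep, hyM]
    ext
    · rw [Z8.sub_x0, e0]
      simp only [hq, Z8.scal, Z8.mul_x0, Z8.mk_x0, Z8.mk_x1, Z8.mk_x2, Z8.mk_x3]
      ring
    · rw [Z8.sub_x1, e1]
      simp only [hq, Z8.scal, Z8.mul_x1, Z8.mk_x0, Z8.mk_x1, Z8.mk_x2, Z8.mk_x3]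
      ring
    · rw [Z8.sub_x2, e2]
      simp only [hq, Z8.scal, Z8.mul_x2, Z8.mk_x0, Z8.mk_x1, Z8.mk_x2, Z8.mk_x3]
      ring
    · rw [Z8.sub_x3, e3]
      simp only [hq, Z8.scal, Z8.mul_x3, Z8.mk_x0, Z8.mk_x1, Z8.mk_x2, Z8.mk_x3]
      ring
  have hNmM : Z8.Nm M = n * (n * n) := by
    rw [hM, Z8.Nm_mul, Z8.Nm_mul, Z8.Nm_σ3, Z8.Nm_σ5, Z8.Nm_σ7]
  have hNmEq : Z8.Nm (x - q * y) * (n * (n * n)) = Z8.Nm (⟨r0, r1, r2, r3⟩ : Z8) := by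
    rw [← hNmM, ← Z8.Nm_mul, key]
  have hbd := Z8.nm_bound n r0 r1 r2 r3 b0 b1 b2 b3
  by_contra hcon
  push_neg at hcon
  have hge : n * (n * (n * n)) ≤ Z8.Nm (x - q * y) * (n * (n * n)) := by
    apply mul_le_mul_of_nonneg_right hcon (by positivity)
  have hn4 : n * (n * (n * n)) = n ^ 4 := by ring
  linarith [hge, hNmEq, hbd, hn4, pow_pos hy 4]

/-- Bezout in `Z8` by Euclidean descent. -/
lemma Z8.bezout : ∀ N : ℕ, ∀ x y : Z8, Z8.Nm y ≤ N →
    ∃ u v : Z8, (u * x + v * y) ∣ x ∧ (u * x + v * y) ∣ y := by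
  intro N
  induction N using Nat.strong_induction_on with
  | _ N ih =>
    intro x y hN
    rcases eq_or_lt_of_le (Z8.Nm_nonneg y) with h0 | hpos
    · have hy : y = 0 := Z8.Nm_eq_zero h0.symm
      subst hy
      exact ⟨1, 0, by simp, by simp⟩
    · obtain ⟨q, hq⟩ := Z8.exists_div x y hpos
      have hM : (Z8.Nm (x - q * y)).toNat < N := by
        have h1 : Z8.Nm (x - q * y) < (N : ℤ) := lt_of_lt_of_le hq hN
        omega
      obtain ⟨u, v, hu, hv⟩ := ih _ hM y (x - q * y)
        (le_of_eq (Int.toNat_of_nonneg (Z8.Nm_nonneg _)).symm)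
      refine ⟨v, u - v * q, ?_, ?_⟩
      · have he : v * x + (u - v * q) * y = u * y + v * (x - q * y) := by ring
        rw [he]
        have hx : x = (x - q * y) + q * y := by ring
        have hdvd : (u * y + v * (x - q * y)) ∣ ((x - q * y) + q * y) :=
          dvd_add hv (Dvd.dvd.mul_left hu q)
        rwa [← hx] at hdvd
      · have he : v * x + (u - v * q) * y = u * y + v * (x - q * y) := by ring
        rw [he]; exact hu

set_option maxHeartbeats 1000000 in
/-- uniqueness of the reduced representation `p = e² - 2f²`. -/
lemma uniq_rep (P : ℤ) (hP : Prime P) (a b e f : ℤ) (ha : 0 < a) (hb : 0 < b)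
    (he : 0 < e) (hf : 0 < f) (h1 : a ^ 2 - 2 * b ^ 2 = P) (h2 : e ^ 2 - 2 * f ^ 2 = P)
    (hb2 : 2 * b ^ 2 < P) (hf2 : 2 * f ^ 2 < P) : e = a ∧ f = b := by
  have hP0 : 0 < P := by nlinarith [sq_nonneg b]
  have haP : a ^ 2 < 2 * P := by nlinarith
  have heP : e ^ 2 < 2 * P := by nlinarith
  have hafP : a * f < P := by nlinarith [mul_pos ha hf]
  have hebP : e * b < P := by nlinarith [mul_pos he hb]
  have hdvd : P ∣ (e * b - a * f) * (a * f + e * b) :=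
    ⟨b ^ 2 - f ^ 2, by linear_combination b ^ 2 * h2 - f ^ 2 * h1⟩
  rcases hP.dvd_mul.mp hdvd with hH | hH'
  · -- P ∣ eb - af ⇒ eb = af
    have hH0 : e * b - a * f = 0 := by
      refine Int.eq_zero_of_abs_lt_dvd hH ?_
      rw [abs_lt]
      constructor <;> nlinarith [mul_pos ha hf, mul_pos he hb]
    have hG : (a * e - 2 * b * f) ^ 2 - 2 * (e * b - a * f) ^ 2 = P ^ 2 := by
      linear_combination (e ^ 2 - 2 * f ^ 2) * h1 + P * h2
    rw [hH0] at hG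
    have hGpos : 0 < a * e - 2 * b * f := by
      nlinarith [mul_pos ha he, mul_pos hb hf]
    have hGP : a * e - 2 * b * f = P := by
      have hz : (a * e - 2 * b * f - P) * (a * e - 2 * b * f + P) = 0 := by
        linear_combination hG
      rcases mul_eq_zero.mp hz with h | h
      · linarith
      · nlinarith
    have hx : b * (e - a) = a * (f - b) := by linarith [hH0]; 
    have hy : a * (e - a) = 2 * b * (f - b) := by nlinarith [hGP, h1]
    have hkey : (e - a) ^ 2 = 2 * (f - b) ^ 2 := by
      have hab0 : a * b ≠ 0 := by positivity
      have h5 : a * b * ((e - a) ^ 2) = a * b * (2 * (f - b) ^ 2) := by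
        linear_combination (a * (e - a)) * hx + (a * (f - b)) * hy
      exact mul_left_cancel₀ hab0 h5
    obtain ⟨hea, hfb⟩ := sq_eq_two_sq _ _ hkey
    constructor <;> linarith
  · -- P ∣ af + eb : impossible
    exfalso
    have hpos : 0 < a * f + e * b := by positivity
    obtain ⟨k, hk⟩ := hH'
    have hk1 : k = 1 := by
      have hk0 : 0 < k := by nlinarith
      have hk2 : k < 2 := by nlinarith
      omega
    rw [hk1, mul_one] at hk
    have hG : (a * e + 2 * b * f) ^ 2 - 2 * (a * f + e * b) ^ 2 = P ^ 2 := by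
      linear_combination (e ^ 2 - 2 * f ^ 2) * h1 + P * h2
    rw [hk] at hG
    have hG3 : (a * e + 2 * b * f) ^ 2 = 3 * P ^ 2 := by linarith
    have hPG : P ∣ a * e + 2 * b * f := by
      refine hP.dvd_of_dvd_pow (n := 2) ⟨3 * P, by linarith⟩
    obtain ⟨m, hm⟩ := hPG
    have hm3 : m ^ 2 = 3 := by
      have hq : P ^ 2 * m ^ 2 = P ^ 2 * 3 := by
        linear_combination (-(a * e + 2 * b * f + P * m)) * hm + hG3
      have hP2 : (P : ℤ) ^ 2 ≠ 0 := by positivity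
      exact mul_left_cancel₀ hP2 hq
    have hm1 : m ≤ 2 := by nlinarith [sq_nonneg (m - 2)]
    have hm2 : -2 ≤ m := by nlinarith [sq_nonneg (m + 2)]
    interval_cases m <;> norm_num at hm3

/-- the descent: from any totally positive solution we reach the minimal one. -/
lemma descend (P : ℤ) (hP : Prime P) (hodd : ¬(2 : ℤ) ∣ P) (hnsq : ∀ e : ℤ, e ^ 2 ≠ P)
    (a b : ℤ) (ha : 0 < a) (hb : 0 < b) (hab : a ^ 2 - 2 * b ^ 2 = P) (hb2 : 2 * b ^ 2 < P) :
    ∀ n : ℕ, ∀ g : Z8, Z8.S g ≤ (n : ℤ) → Z8.S g ^ 2 - 2 * Z8.T g ^ 2 = P →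
      ∃ x : Z8, Z8.S x = a ∧ Z8.T x = b := by
  have hP0 : 0 < P := by nlinarith [sq_nonneg b]
  intro n
  induction n with
  | zero =>
    intro g hle heq
    exfalso
    have h0 : 0 ≤ Z8.S g := Z8.S_nonneg g
    have : Z8.S g = 0 := le_antisymm (by exact_mod_cast hle) h0
    rw [this] at heq
    nlinarith [sq_nonneg (Z8.T g)]
  | succ n ih =>
    intro g hle heq
    -- WLOG T g ≥ 0
    obtain ⟨g', hS', hT'⟩ : ∃ g' : Z8, Z8.S g' = Z8.S g ∧ Z8.T g' = |Z8.T g| := by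
      rcases le_or_gt 0 (Z8.T g) with h | h
      · exact ⟨g, rfl, (abs_of_nonneg h).symm⟩
      · exact ⟨Z8.σ3 g, Z8.S_σ3 g, by rw [Z8.T_σ3, abs_of_neg h]⟩
    have heq' : Z8.S g' ^ 2 - 2 * Z8.T g' ^ 2 = P := by
      rw [hS', hT', _root_.sq_abs]; exact heq
    have hfnn : 0 ≤ Z8.T g' := by rw [hT']; exact abs_nonneg _
    have hS0 : 0 ≤ Z8.S g' := Z8.S_nonneg g'
    have hSpos : 0 < Z8.S g' := by
      rcases hS0.lt_or_eq with h | h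
      · exact h
      · exfalso; rw [← h] at heq'; nlinarith [sq_nonneg (Z8.T g')]
    have hfpos : 0 < Z8.T g' := by
      rcases hfnn.lt_or_eq with h | h
      · exact h
      · exfalso
        rw [← h] at heq'
        exact hnsq (Z8.S g') (by linarith)
    rcases lt_trichotomy (2 * Z8.T g' ^ 2) P with hcase | hcase | hcase
    · -- reduced : uniqueness gives the answer
      obtain ⟨h1, h2⟩ := uniq_rep P hP a b (Z8.S g') (Z8.T g') ha hb hSpos hfpos hab heq' hb2 hcase
      exact ⟨g', h1, h2⟩
    · exact absurd ⟨Z8.T g' ^ 2, hcase.symm⟩ hodd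
    · -- descend
      set g₁ := g' * Z8.u with hg₁
      have hS1 : Z8.S g₁ = 3 * Z8.S g' - 4 * Z8.T g' := by rw [hg₁, Z8.S_mul_u]
      have hT1 : Z8.T g₁ = 3 * Z8.T g' - 2 * Z8.S g' := by rw [hg₁, Z8.T_mul_u]
      have heq1 : Z8.S g₁ ^ 2 - 2 * Z8.T g₁ ^ 2 = P := by
        rw [hS1, hT1]; linear_combination heq'
      have he2f : Z8.S g' < 2 * Z8.T g' := by nlinarith
      have hlt : Z8.S g₁ ≤ (n : ℤ) := by
        have h5 : Z8.S g ≤ (n : ℤ) + 1 := by exact_mod_cast hle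
        have h6 : Z8.S g' ≤ (n : ℤ) + 1 := by rw [hS']; exact h5
        rw [hS1]
        linarith
      exact ih g₁ hlt heq1

/-! ### Complex-number identities -/

section ComplexLemmas

lemma hs : ((Real.sqrt 2 : ℝ) : ℂ) ^ 2 = 2 := by
  rw [← Complex.ofReal_pow, Real.sq_sqrt (by norm_num : (0:ℝ) ≤ 2)]
  norm_num

lemma hzeta : ζ₈ = ((Real.sqrt 2 : ℝ) + (Real.sqrt 2 : ℝ) * Complex.I) / 2 := by
  have harg : (2 * (Real.pi : ℂ) * Complex.I / 8) = ((Real.pi / 4 : ℝ) : ℂ) * Complex.I := by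
    push_cast; ring
  rw [ζ₈, harg, Complex.exp_mul_I, ← Complex.ofReal_cos, ← Complex.ofReal_sin,
    Real.cos_pi_div_four, Real.sin_pi_div_four]
  push_cast
  ring

lemma hzeta4 : ζ₈ ^ 4 = -1 := by
  rw [hzeta]
  linear_combination ((1/8 : ℂ) + (1/2 : ℂ) * Complex.I + (3/4 : ℂ) * Complex.I^2 + (1/2 : ℂ) * Complex.I^3 + (1/8 : ℂ) * Complex.I^4 + (1/16 : ℂ) * (Real.sqrt 2:ℂ)^2 + (1/4 : ℂ) * (Real.sqrt 2:ℂ)^2 * Complex.I + (3/8 : ℂ) * (Real.sqrt 2:ℂ)^2 * Complex.I^2 + (1/4 : ℂ) * (Real.sqrt 2:ℂ)^2 * Complex.I^3 + (1/16 : ℂ) * (Real.sqrt 2:ℂ)^2 * Complex.I^4) * hs + ((5/4 : ℂ) + (1 : ℂ) * Complex.I + (1/4 : ℂ) * Complex.I^2) * Complex.I_sq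

lemma hzeta8 : ζ₈ ^ 8 = 1 := by
  rw [show (8 : ℕ) = 4 * 2 from rfl, pow_mul, hzeta4]
  norm_num

lemma hsqrt2 : ((Real.sqrt 2 : ℝ) : ℂ) = ζ₈ - ζ₈ ^ 3 := by
  rw [hzeta]
  linear_combination ((1/8 : ℂ) * (Real.sqrt 2:ℂ) + (3/8 : ℂ) * (Real.sqrt 2:ℂ) * Complex.I + (3/8 : ℂ) * (Real.sqrt 2:ℂ) * Complex.I^2 + (1/8 : ℂ) * (Real.sqrt 2:ℂ) * Complex.I^3) * hs + ((3/4 : ℂ) * (Real.sqrt 2:ℂ) + (1/4 : ℂ) * (Real.sqrt 2:ℂ) * Complex.I) * Complex.I_sq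

lemma hconjzeta : (starRingEnd ℂ) ζ₈ = ζ₈ ^ 7 := by
  rw [hzeta]
  simp only [map_div₀, map_add, map_mul, Complex.conj_I, Complex.conj_ofReal, map_ofNat]
  linear_combination ((-1/32 : ℂ) * (Real.sqrt 2:ℂ) + (-7/32 : ℂ) * (Real.sqrt 2:ℂ) * Complex.I + (-21/32 : ℂ) * (Real.sqrt 2:ℂ) * Complex.I^2 + (-35/32 : ℂ) * (Real.sqrt 2:ℂ) * Complex.I^3 + (-35/32 : ℂ) * (Real.sqrt 2:ℂ) * Complex.I^4 + (-21/32 : ℂ) * (Real.sqrt 2:ℂ) * Complex.I^5 + (-7/32 : ℂ) * (Real.sqrt 2:ℂ) * Complex.I^6 + (-1/32 : ℂ) * (Real.sqrt 2:ℂ) * Complex.I^7 + (-1/64 : ℂ) * (Real.sqrt 2:ℂ)^3 + (-7/64 : ℂ) * (Real.sqrt 2:ℂ)^3 * Complex.I + (-21/64 : ℂ) * (Real.sqrt 2:ℂ)^3 * Complex.I^2 + (-35/64 : ℂ) * (Real.sqrt 2:ℂ)^3 * Complex.I^3 + (-35/64 : ℂ) * (Real.sqrt 2:ℂ)^3 *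 Complex.I^4 + (-21/64 : ℂ) * (Real.sqrt 2:ℂ)^3 * Complex.I^5 + (-7/64 : ℂ) * (Real.sqrt 2:ℂ)^3 * Complex.I^6 + (-1/64 : ℂ) * (Real.sqrt 2:ℂ)^3 * Complex.I^7 + (-1/128 : ℂ) * (Real.sqrt 2:ℂ)^5 + (-7/128 : ℂ) * (Real.sqrt 2:ℂ)^5 * Complex.I + (-21/128 : ℂ) * (Real.sqrt 2:ℂ)^5 * Complex.I^2 + (-35/128 : ℂ) * (Real.sqrt 2:ℂ)^5 * Complex.I^3 + (-35/128 : ℂ) * (Real.sqrt 2:ℂ)^5 * Complex.I^4 + (-21/128 : ℂ) * (Real.sqrt 2:ℂ)^5 * Complex.I^5 + (-7/128 : ℂ) * (Real.sqrt 2:ℂ)^5 * Complex.I^6 + (-1/128 : ℂ) * (Real.sqrt 2:ℂ)^5 * Complex.I^7) * hs + ((7/16 : ℂ) * (Real.sqrt 2:ℂ) + (-15/16 : ℂ) * (Real.sqrt 2:ℂ) * Complex.I + (-7/4 : ℂ) * (Real.sqrt 2:ℂ) * Complex.I^2 + (-5/4 : ℂ) * (Real.sqrt 2:ℂ) * Complex.I^3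 + (-7/16 : ℂ) * (Real.sqrt 2:ℂ) * Complex.I^4 + (-1/16 : ℂ) * (Real.sqrt 2:ℂ) * Complex.I^5) * Complex.I_sq

lemma G1 (c0 c1 c2 c3 a b : ℤ) (hS : c0 ^ 2 + c1 ^ 2 + c2 ^ 2 + c3 ^ 2 = a)
    (hT : c0 * c1 + c1 * c2 + c2 * c3 - c3 * c0 = b) :
    conj8 c0 c1 c2 c3 1 * conj8 c0 c1 c2 c3 7 = (a : ℂ) + b * Real.sqrt 2 := by
  have h4 : ζ₈ ^ 4 = -1 := hzeta4
  have hSc : (c0 : ℂ) ^ 2 + (c1 : ℂ) ^ 2 + (c2 : ℂ) ^ 2 + (c3 : ℂ) ^ 2 = (a : ℂ) := by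
    exact_mod_cast hS
  have hTc : (c0 : ℂ) * c1 + (c1 : ℂ) * c2 + (c2 : ℂ) * c3 - (c3 : ℂ) * c0 = (b : ℂ) := by
    exact_mod_cast hT
  unfold conj8
  rw [hsqrt2]
  linear_combination ((-1 : ℂ) * (c3:ℂ)^2 + (-1 : ℂ) * (c2:ℂ)^2 + (-1 : ℂ) * (c1:ℂ)^2 + (-1 : ℂ) * ζ₈ * (c2:ℂ) * (c3:ℂ) + (-1 : ℂ) * ζ₈ * (c1:ℂ) * (c2:ℂ) + (1 : ℂ) * ζ₈ * (c0:ℂ) * (c3:ℂ) + (1 : ℂ) * ζ₈^2 * (c0:ℂ) * (c2:ℂ) + (1 : ℂ) * ζ₈^3 * (c2:ℂ) * (c3:ℂ) + (1 : ℂ) * ζ₈^3 * (c1:ℂ) * (c2:ℂ) + (1 : ℂ) * ζ₈^3 * (c0:ℂ) * (c1:ℂ) + (1 : ℂ) * ζ₈^4 * (c3:ℂ)^2 + (1 : ℂ) * ζ₈^4 * (c2:ℂ)^2 + (1 : ℂ) * ζ₈^4 * (c1:ℂ)^2 + (1 : ℂ) * ζ₈^5 * (c2:ℂ) * (c3:ℂ)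 + (1 : ℂ) * ζ₈^5 * (c1:ℂ) * (c2:ℂ) + (-1 : ℂ) * ζ₈^5 * (c0:ℂ) * (c3:ℂ) + (-1 : ℂ) * ζ₈^6 * (c0:ℂ) * (c2:ℂ) + (-1 : ℂ) * ζ₈^7 * (c2:ℂ) * (c3:ℂ) + (-1 : ℂ) * ζ₈^7 * (c1:ℂ) * (c2:ℂ) + (-1 : ℂ) * ζ₈^8 * (c3:ℂ)^2 + (-1 : ℂ) * ζ₈^8 * (c2:ℂ)^2 + (-1 : ℂ) * ζ₈^9 * (c2:ℂ) * (c3:ℂ) + (1 : ℂ) * ζ₈^9 * (c0:ℂ) * (c3:ℂ) + (1 : ℂ) * ζ₈^10 * (c1:ℂ) * (c3:ℂ) + (1 : ℂ) * ζ₈^10 * (c0:ℂ) * (c2:ℂ) + (1 : ℂ) * ζ₈^11 * (c2:ℂ) * (c3:ℂ) + (1 : ℂ) * ζ₈^11 * (c1:ℂ) * (c2:ℂ) + (1 : ℂ) * ζ₈^12 * (c3:ℂ)^2 + (1 : ℂ) * ζ₈^12 * (c2:ℂ)^2 + (1 : ℂ) * ζ₈^13 * (c2:ℂ) * (c3:ℂ)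 + (-1 : ℂ) * ζ₈^13 * (c0:ℂ) * (c3:ℂ) + (-1 : ℂ) * ζ₈^14 * (c1:ℂ) * (c3:ℂ) + (-1 : ℂ) * ζ₈^15 * (c2:ℂ) * (c3:ℂ) + (-1 : ℂ) * ζ₈^16 * (c3:ℂ)^2 + (1 : ℂ) * ζ₈^17 * (c0:ℂ) * (c3:ℂ) + (1 : ℂ) * ζ₈^18 * (c1:ℂ) * (c3:ℂ) + (1 : ℂ) * ζ₈^19 * (c2:ℂ) * (c3:ℂ) + (1 : ℂ) * ζ₈^20 * (c3:ℂ)^2) * h4 + hSc + (ζ₈ - ζ₈^3) * hTc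

lemma G2 (c0 c1 c2 c3 a b : ℤ) (hS : c0 ^ 2 + c1 ^ 2 + c2 ^ 2 + c3 ^ 2 = a)
    (hT : c0 * c1 + c1 * c2 + c2 * c3 - c3 * c0 = b) :
    conj8 c0 c1 c2 c3 3 * conj8 c0 c1 c2 c3 5 = (a : ℂ) - b * Real.sqrt 2 := by
  have h4 : ζ₈ ^ 4 = -1 := hzeta4
  have hSc : (c0 : ℂ) ^ 2 + (c1 : ℂ) ^ 2 + (c2 : ℂ) ^ 2 + (c3 : ℂ) ^ 2 = (a : ℂ) := by
    exact_mod_cast hS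
  have hTc : (c0 : ℂ) * c1 + (c1 : ℂ) * c2 + (c2 : ℂ) * c3 - (c3 : ℂ) * c0 = (b : ℂ) := by
    exact_mod_cast hT
  unfold conj8
  rw [hsqrt2]
  linear_combination ((-1 : ℂ) * (c3:ℂ)^2 + (-1 : ℂ) * (c2:ℂ)^2 + (-1 : ℂ) * (c1:ℂ)^2 + (1 : ℂ) * ζ₈ * (c2:ℂ) * (c3:ℂ) + (1 : ℂ) * ζ₈ * (c1:ℂ) * (c2:ℂ) + (-1 : ℂ) * ζ₈ * (c0:ℂ) * (c3:ℂ) + (1 : ℂ) * ζ₈ * (c0:ℂ) * (c1:ℂ) + (-1 : ℂ) * ζ₈^3 * (c2:ℂ) * (c3:ℂ) + (-1 : ℂ) * ζ₈^3 * (c1:ℂ) * (c2:ℂ) + (1 : ℂ) * ζ₈^3 * (c0:ℂ) * (c3:ℂ) + (1 : ℂ) * ζ₈^4 * (c3:ℂ)^2 + (1 : ℂ) * ζ₈^4 * (c2:ℂ)^2 + (1 : ℂ) * ζ₈^4 * (c1:ℂ)^2 + (-1 : ℂ) * ζ₈^5 * (c2:ℂ) * (c3:ℂ) + (-1 : ℂ)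 * ζ₈^5 * (c1:ℂ) * (c2:ℂ) + (1 : ℂ) * ζ₈^5 * (c0:ℂ) * (c3:ℂ) + (1 : ℂ) * ζ₈^6 * (c0:ℂ) * (c2:ℂ) + (1 : ℂ) * ζ₈^7 * (c2:ℂ) * (c3:ℂ) + (1 : ℂ) * ζ₈^7 * (c1:ℂ) * (c2:ℂ) + (-1 : ℂ) * ζ₈^7 * (c0:ℂ) * (c3:ℂ) + (-1 : ℂ) * ζ₈^8 * (c3:ℂ)^2 + (-1 : ℂ) * ζ₈^8 * (c2:ℂ)^2 + (1 : ℂ) * ζ₈^9 * (c2:ℂ) * (c3:ℂ) + (1 : ℂ) * ζ₈^9 * (c1:ℂ) * (c2:ℂ) + (-1 : ℂ) * ζ₈^11 * (c2:ℂ) * (c3:ℂ) + (1 : ℂ) * ζ₈^11 * (c0:ℂ) * (c3:ℂ) + (1 : ℂ) * ζ₈^12 * (c3:ℂ)^2 + (1 : ℂ) * ζ₈^12 * (c2:ℂ)^2 + (-1 : ℂ) * ζ₈^13 * (c2:ℂ) * (c3:ℂ) + (1 : ℂ) * ζ₈^14 * (c1:ℂ) * (c3:ℂ) + (1 : ℂ)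 * ζ₈^15 * (c2:ℂ) * (c3:ℂ) + (-1 : ℂ) * ζ₈^16 * (c3:ℂ)^2 + (1 : ℂ) * ζ₈^17 * (c2:ℂ) * (c3:ℂ) + (1 : ℂ) * ζ₈^20 * (c3:ℂ)^2) * h4 + hSc - (ζ₈ - ζ₈^3) * hTc

lemma hconj1 (c0 c1 c2 c3 : ℤ) :
    conj8 c0 c1 c2 c3 7 = (starRingEnd ℂ) (conj8 c0 c1 c2 c3 1) := by
  unfold conj8
  simp only [map_add, map_mul, map_pow, map_intCast, hconjzeta]
  ring

lemma hconj3 (c0 c1 c2 c3 : ℤ) :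
    conj8 c0 c1 c2 c3 5 = (starRingEnd ℂ) (conj8 c0 c1 c2 c3 3) := by
  have h8 : ζ₈ ^ 8 = 1 := hzeta8
  unfold conj8
  simp only [map_add, map_mul, map_pow, map_intCast, hconjzeta]
  linear_combination ((-1 : ℂ) * ζ₈^5 * (c1:ℂ) + (-1 : ℂ) * ζ₈^10 * (c2:ℂ) + (-1 : ℂ) * ζ₈^13 * (c1:ℂ) + (-1 : ℂ) * ζ₈^15 * (c3:ℂ) + (-1 : ℂ) * ζ₈^18 * (c2:ℂ) + (-1 : ℂ) * ζ₈^23 * (c3:ℂ) + (-1 : ℂ) * ζ₈^26 * (c2:ℂ) + (-1 : ℂ) * ζ₈^31 * (c3:ℂ) + (-1 : ℂ) * ζ₈^34 * (c2:ℂ) + (-1 : ℂ) * ζ₈^39 * (c3:ℂ) + (-1 : ℂ) * ζ₈^47 * (c3:ℂ) + (-1 : ℂ) * ζ₈^55 * (c3:ℂ)) * h8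

end ComplexLemmas

set_option maxHeartbeats 2000000 in
theorem exists_alpha_relative_norm_p1mod8
    (p : ℕ) (hp : p.Prime) (hp1 : p % 8 = 1)
    (a b : ℤ) (ha : 0 < a) (hb : 0 < b) (hab : a ^ 2 - 2 * b ^ 2 = (p : ℤ))
    (hmin : ∀ a' b' : ℤ, 0 < a' → 0 < b' → a' ^ 2 - 2 * b' ^ 2 = (p : ℤ) → a ≤ a') :
    ∃ c₀ c₁ c₂ c₃ : ℤ,
      conj8 c₀ c₁ c₂ c₃ 1 * conj8 c₀ c₁ c₂ c₃ 7 = (a : ℂ) + b * Real.sqrt 2 ∧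
      conj8 c₀ c₁ c₂ c₃ 3 * conj8 c₀ c₁ c₂ c₃ 5 = (a : ℂ) - b * Real.sqrt 2 ∧
      2 * ‖conj8 c₀ c₁ c₂ c₃ 1‖ ^ 2 + 2 * ‖conj8 c₀ c₁ c₂ c₃ 3‖ ^ 2
        = 4 * a := by
  have hPZ : Prime ((p : ℤ)) := Nat.prime_iff_prime_int.mp hp
  have hp2 : p ≠ 2 := by omega
  have hppos : 0 < (p : ℤ) := by exact_mod_cast hp.pos
  have hp_odd : ¬(2 : ℤ) ∣ (p : ℤ) := by
    intro hdvd
    have h2 : (2 : ℕ) ∣ p := by exact_mod_cast hdvd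
    have := (Nat.Prime.eq_one_or_self_of_dvd hp 2 h2)
    omega
  -- p is not a perfect square
  have hnsq : ∀ e : ℤ, e ^ 2 ≠ (p : ℤ) := by
    intro e h
    have h1 : (e.natAbs) ^ 2 = p := by
      have h2 : (e ^ 2).natAbs = p := by rw [h]; exact Int.natAbs_natCast p
      rwa [Int.natAbs_pow] at h2
    have hdvd : e.natAbs ∣ p := ⟨e.natAbs, by rw [← h1]; ring⟩
    have h2le := hp.two_le
    rcases hp.eq_one_or_self_of_dvd e.natAbs hdvd with h2 | h2
    · rw [h2] at h1; simp at h1; omega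
    · rw [h2] at h1
      have h3 : p * p = p * 1 := by nlinarith
      have := Nat.eq_of_mul_eq_mul_left hp.pos h3
      omega
  -- 2 b² < p
  have h3a4b : 0 < 3 * a - 4 * b := by
    by_contra hcon
    push_neg at hcon
    nlinarith [mul_nonneg (by linarith : (0:ℤ) ≤ 4 * b - 3 * a)
      (by linarith : (0:ℤ) ≤ 4 * b + 3 * a), hab, hppos, sq_nonneg b]
  have hne23 : 2 * a - 3 * b ≠ 0 := by
    intro h
    have hsq : (a - b) ^ 2 = (p : ℤ) := by linear_combination hab - b * h
    exact hnsq (a - b) hsq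
  have hminapp : a ≤ 3 * a - 4 * b := by
    refine hmin (3 * a - 4 * b) |2 * a - 3 * b| h3a4b (abs_pos.mpr hne23) ?_
    rw [_root_.sq_abs]
    linear_combination hab
  have hb2 : 2 * b ^ 2 < (p : ℤ) := by
    have h2ba : 2 * b ≤ a := by linarith
    have h4b2 : 4 * b ^ 2 ≤ a ^ 2 := by nlinarith
    have hle : 2 * b ^ 2 ≤ (p : ℤ) := by linarith
    rcases hle.lt_or_eq with h | h
    · exact h
    · exfalso; exact hp_odd ⟨b ^ 2, h.symm⟩
  -- find z with p ∣ z² + 2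
  haveI : Fact p.Prime := ⟨hp⟩
  haveI : NeZero p := ⟨hp.pos.ne'⟩
  have h2sq : IsSquare (2 : ZMod p) :=
    (ZMod.exists_sq_eq_two_iff (p := p) hp2).mpr (Or.inl hp1)
  have hm1sq : IsSquare (-1 : ZMod p) :=
    (ZMod.exists_sq_eq_neg_one_iff (p := p)).mpr (by omega)
  obtain ⟨t, ht⟩ := h2sq
  obtain ⟨i, hi⟩ := hm1sq
  set w : ZMod p := i * t with hw
  have hw2 : w * w = -2 := by
    rw [hw]
    calc i * t * (i * t) = (i * i) * (t * t) := by ring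
    _ = (-1) * 2 := by rw [← hi, ← ht]
    _ = -2 := by ring
  set z : ℤ := (w.val : ℤ) with hz
  have hzdvd : (p : ℤ) ∣ z ^ 2 + 2 := by
    have hcast : ((z ^ 2 + 2 : ℤ) : ZMod p) = 0 := by
      push_cast
      rw [hz]
      push_cast
      rw [ZMod.natCast_val, ZMod.cast_id]
      rw [sq, hw2]
      ring
    exact (ZMod.intCast_zmod_eq_zero_iff_dvd _ p).mp hcast
  -- set up the elements of Z8
  set π : Z8 := ⟨a, b, 0, -b⟩ with hπ
  set π' : Z8 := ⟨a, -b, 0, b⟩ with hπ'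
  set ξ : Z8 := ⟨z, -1, 0, -1⟩ with hξ
  set ξ' : Z8 := ⟨z, 1, 0, 1⟩ with hξ'
  have hNmπ : Z8.Nm π = (p : ℤ) ^ 2 := by
    simp only [Z8.Nm, Z8.A, Z8.B, hπ, Z8.mk_x0, Z8.mk_x1, Z8.mk_x2, Z8.mk_x3]
    linear_combination ((a ^ 2 - 2 * b ^ 2) + (p : ℤ)) * hab
  have hππ' : π * π' = Z8.scal (p : ℤ) := by
    ext <;> simp [hπ, hπ', Z8.scal] <;> linarith [hab]
  have hξξ' : ξ * ξ' = Z8.scal (z ^ 2 + 2) := by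
    ext <;> simp [hξ, hξ', Z8.scal] <;> ring
  have hσ7π : Z8.σ7 π = π := by
    ext <;> simp [Z8.σ7, hπ]
  have hσ7ξ' : Z8.σ7 ξ' = ξ := by
    ext <;> simp [Z8.σ7, hξ, hξ']
  have hσ7ξ : Z8.σ7 ξ = ξ' := by
    ext <;> simp [Z8.σ7, hξ, hξ']
  have hπdvd : π ∣ ξ * ξ' := by
    obtain ⟨m, hm⟩ := hzdvd
    rw [hξξ', hm, Z8.scal_mul, ← hππ']
    exact ⟨π' * Z8.scal m, by ring⟩
  -- Bezout
  obtain ⟨u, v, hgπ, hgξ⟩ := Z8.bezout (Z8.Nm ξ).toNat π ξ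
    (le_of_eq (Int.toNat_of_nonneg (Z8.Nm_nonneg _)).symm)
  set g : Z8 := u * π + v * ξ with hg
  -- Nm g ∈ {1, p, p²}
  have hNgdvd : Z8.Nm g ∣ (p : ℤ) ^ 2 := hNmπ ▸ Z8.Nm_dvd hgπ
  have hNgnat : (Z8.Nm g).natAbs ∣ p ^ 2 := by
    have := Int.natAbs_dvd_natAbs.mpr hNgdvd
    rwa [Int.natAbs_pow, Int.natAbs_natCast] at this
  obtain ⟨k, hk2, hkeq⟩ := (Nat.dvd_prime_pow hp).mp hNgnat
  have hNg_eq : Z8.Nm g = (p : ℤ) ^ k := by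
    have h1 : (Z8.Nm g).natAbs = p ^ k := hkeq
    have h2 : Z8.Nm g = ((Z8.Nm g).natAbs : ℤ) := by
      rw [Int.natAbs_of_nonneg (Z8.Nm_nonneg g)]
    rw [h2, h1]
    push_cast
    ring
  -- rule out k = 0 and k = 2
  have hπ_dvd_g_imp : π ∣ ξ → False := by
    intro hπξ
    have hπξ' : π ∣ ξ' := by
      have := Z8.σ7_dvd hπξ
      rwa [hσ7π, hσ7ξ] at this
    have hdiff : π ∣ ξ' - ξ := dvd_sub hπξ' hπξ
    have hNmdiff : Z8.Nm π ∣ Z8.Nm (ξ' - ξ) := Z8.Nm_dvd hdiff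
    have hval : Z8.Nm (ξ' - ξ) = 64 := by
      have : ξ' - ξ = (⟨0, 2, 0, 2⟩ : Z8) := by ext <;> simp [hξ, hξ']
      rw [this]
      simp [Z8.Nm, Z8.A, Z8.B]
    rw [hNmπ, hval] at hNmdiff
    have hnat : p ^ 2 ∣ 64 := by
      have := Int.natAbs_dvd_natAbs.mpr hNmdiff
      simpa [Int.natAbs_pow] using this
    have hpdvd : p ∣ 64 := dvd_trans (dvd_pow_self p (by norm_num)) hnat
    have : p ∣ 2 ^ 6 := by norm_num at hpdvd ⊢; exact hpdvd
    have := Nat.Prime.dvd_of_dvd_pow hp this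
    have := (Nat.prime_dvd_prime_iff_eq hp Nat.prime_two).mp this
    exact hp2 this
  have hk1 : k = 1 := by
    rcases hk2.lt_or_eq with h | h
    · interval_cases k
      · -- Nm g = 1 : g is a unit, so π and ξ are coprime, contradiction
        exfalso
        have hNg1 : Z8.Nm g = 1 := by rw [hNg_eq]; ring
        have hunit : g * (Z8.σ3 g * (Z8.σ5 g * Z8.σ7 g)) = 1 := by
          rw [Z8.mul_conjs, hNg1, Z8.scal_one]
        set G' : Z8 := Z8.σ3 g * (Z8.σ5 g * Z8.σ7 g) with hG'
        have hπξ'dvd : π ∣ ξ' := by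
          have he : ξ' = (u * G' * ξ') * π + (v * G') * (ξ * ξ') := by
            have h1 : g * G' = 1 := hunit
            linear_combination (-ξ') * h1
          rw [he]
          exact dvd_add (Dvd.intro_left _ rfl) (Dvd.dvd.mul_left hπdvd _)
        have hπξdvd : π ∣ ξ := by
          have := Z8.σ7_dvd hπξ'dvd
          rwa [hσ7π, hσ7ξ'] at this
        exact hπ_dvd_g_imp hπξdvd
      · -- Nm g = p : the good case
        rfl
    · -- k = 2 : Nm g = p², so π ∣ g ∣ ξ, contradiction
      exfalso
      subst h
      obtain ⟨h, hh⟩ := hgπ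
      have hNh : Z8.Nm π = Z8.Nm g * Z8.Nm h := by rw [hh, Z8.Nm_mul]
      have hNh1 : Z8.Nm h = 1 := by
        rw [hNmπ, hNg_eq] at hNh
        have hp2ne : ((p : ℤ) ^ 2) ≠ 0 := by positivity
        have : (p : ℤ) ^ 2 * 1 = (p : ℤ) ^ 2 * Z8.Nm h := by linarith [hNh]
        linarith [mul_left_cancel₀ hp2ne this]
      have hhunit : h * (Z8.σ3 h * (Z8.σ5 h * Z8.σ7 h)) = 1 := by
        rw [Z8.mul_conjs, hNh1, Z8.scal_one]
      set H' : Z8 := Z8.σ3 h * (Z8.σ5 h * Z8.σ7 h) with hH'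
      have hπg : π ∣ g := by
        refine ⟨H', ?_⟩
        calc g = g * (h * H') := by rw [hhunit, mul_one]
        _ = (g * h) * H' := by ring
        _ = π * H' := by rw [← hh]
      exact hπ_dvd_g_imp (dvd_trans hπg hgξ)
  have hNgp : Z8.Nm g = (p : ℤ) := by rw [hNg_eq, hk1]; ring
  -- the relative norm of g gives a totally positive solution
  have hSTg : Z8.S g ^ 2 - 2 * Z8.T g ^ 2 = (p : ℤ) := by
    rw [← Z8.Nm_eq]; exact hNgp
  -- descend to the minimal solution
  obtain ⟨x, hSx, hTx⟩ := descend (p : ℤ) hPZ hp_odd hnsq a b ha hb hab hb2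
    (Z8.S g).toNat g (le_of_eq (Int.toNat_of_nonneg (Z8.S_nonneg g)).symm) hSTg
  -- conclude
  refine ⟨x.x0, x.x1, x.x2, x.x3, ?_, ?_, ?_⟩
  · exact G1 x.x0 x.x1 x.x2 x.x3 a b hSx hTx
  · exact G2 x.x0 x.x1 x.x2 x.x3 a b hSx hTx
  · have e1 := G1 x.x0 x.x1 x.x2 x.x3 a b hSx hTx
    have e3 := G2 x.x0 x.x1 x.x2 x.x3 a b hSx hTx
    have hn1 : Complex.normSq (conj8 x.x0 x.x1 x.x2 x.x3 1) = (a : ℝ) + b * Real.sqrt 2 := by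
      have hcc : ((Complex.normSq (conj8 x.x0 x.x1 x.x2 x.x3 1) : ℝ) : ℂ)
          = (a : ℂ) + b * Real.sqrt 2 := by
        rw [← Complex.mul_conj, ← hconj1]
        exact e1
      exact_mod_cast hcc
    have hn3 : Complex.normSq (conj8 x.x0 x.x1 x.x2 x.x3 3) = (a : ℝ) - b * Real.sqrt 2 := by
      have hcc : ((Complex.normSq (conj8 x.x0 x.x1 x.x2 x.x3 3) : ℝ) : ℂ)
          = (a : ℂ) - b * Real.sqrt 2 := by
        rw [← Complex.mul_conj, ← hconj3]
        exact e3
      exact_mod_cast hcc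
    rw [Complex.sq_norm, Complex.sq_norm, hn1, hn3]
    ring
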